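/- For every z ∈ ℂ with Im z > 0, the value tan z is defined (tan has no poles in the open upper half-plane) and satisfies Im(tan z) ≥ (1 − e^{−2·Im z})/2. In particular tan maps the open upper half-plane into itself, and Im z = O(Im tan z) uniformly in Re z as Im z → 0. -/

import Mathlib

open Complex Set Filter MeasureTheory Topology
open scoped ENNReal

noncomputable section

/-- The open upper half-plane, as a subset of `ℂ`. -/
def UHP : Set ℂ := {z : ℂ | 0 < z.im}

/-- A real entire function: entire, mapping `ℝ` into `ℝ`. -/
def RealEntire (f : ℂ → ℂ) : Prop :=
  Differentiable ℂ f ∧ ∀ x : ℝ, (f (x : ℂ)).im = 0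

/-- A function is transcendental if it is not a polynomial. -/
def TranscendentalFun (f : ℂ → ℂ) : Prop :=
  ¬ ∃ p : Polynomial ℂ, ∀ z : ℂ, f z = p.eval z

/-- The maximum modulus `M(r, f)`. -/
def maxMod (f : ℂ → ℂ) (r : ℝ) : ℝ :=
  sSup ((fun z => ‖f z‖) '' Metric.sphere (0 : ℂ) r)

/-- `f` has infinite order: `limsup (log log M(r,f)) / log r = ∞`. -/
def InfiniteOrder (f : ℂ → ℂ) : Prop :=
  ∀ c r₀ : ℝ, ∃ r : ℝ, r₀ ≤ r ∧ c * Real.log r < Real.log (Real.log (maxMod f r))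

/-- `f` has only finitely many non-real zeros. -/
def FinitelyManyNonRealZeros (f : ℂ → ℂ) : Prop :=
  {z : ℂ | z.im ≠ 0 ∧ f z = 0}.Finite

open Classical in
/-- The order of a meromorphic function at a point (junk value `0` if not meromorphic there). -/
def merOrder (g : ℂ → ℂ) (z : ℂ) : WithTop ℤ :=
  if h : MeromorphicAt g z then meromorphicOrderAt g z else 0

/-- Multiplicity of `z` as a zero of `g` (0 if not a zero). -/
def zeroMult (g : ℂ → ℂ) (z : ℂ) : ℕ := (WithTop.untopD 0 (merOrder g z)).toNat

/-- Multiplicity of `z` as a pole of `g` (0 if not a pole). -/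
def poleMult (g : ℂ → ℂ) (z : ℂ) : ℕ := (-(WithTop.untopD 0 (merOrder g z))).toNat

/-- `g` has a pole at `z`. -/
def IsPoleAt (g : ℂ → ℂ) (z : ℂ) : Prop := MeromorphicAt g z ∧ merOrder g z < 0

/-- The Weierstrass primary factor `E_q(w)`. -/
def weierstrassE (q : ℕ) (w : ℂ) : ℂ :=
  (1 - w) * Complex.exp (∑ k ∈ Finset.range q, w ^ (k + 1) / ((k : ℂ) + 1))

/-- A real entire function with only real zeros, of genus at most `2p+1`,
written in Hadamard product form. -/
def GenusForm (p : ℕ) (g : ℂ → ℂ) : Prop :=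
  ∃ (c : ℝ) (μ : ℕ) (Q : Polynomial ℝ) (q : ℕ) (ι : Type) (a : ι → ℝ),
    Countable ι ∧ c ≠ 0 ∧ Q.natDegree ≤ 2 * p + 1 ∧ q ≤ 2 * p + 1 ∧
    (∀ i, a i ≠ 0) ∧ Summable (fun i => |a i| ^ (-((q : ℝ) + 1))) ∧
    ∀ z : ℂ, g z = (c : ℂ) * z ^ μ * Complex.exp ((Q.map (algebraMap ℝ ℂ)).eval z) *
      ∏' i, weierstrassE q (z / (a i : ℂ))

/-- The class `V_{2p}`. -/
def VClass (p : ℕ) : Set (ℂ → ℂ) :=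
  {f | ∃ (a : ℝ) (g : ℂ → ℂ), 0 ≤ a ∧ Differentiable ℂ g ∧ GenusForm p g ∧
    ∀ z : ℂ, f z = g z * Complex.exp (-(a : ℂ) * z ^ (2 * p + 2))}

/-- The class `U_{2p}`: `U_0 = V_0`, `U_{2p} = V_{2p} \ V_{2p-2}` for `p ≥ 1`. -/
def UClass (p : ℕ) : Set (ℂ → ℂ) :=
  if p = 0 then VClass 0 else VClass p \ VClass (p - 1)

/-- The class `U_{2p}^*`: functions `f = P·h` with `h ∈ U_{2p}` and `P` a real
polynomial without real zeros. -/
def UStarClass (p : ℕ) : Set (ℂ → ℂ) :=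
  {f | ∃ (P : Polynomial ℝ) (h : ℂ → ℂ), (∀ x : ℝ, P.eval x ≠ 0) ∧ h ∈ UClass p ∧
    ∀ z : ℂ, f z = (P.map (algebraMap ℝ ℂ)).eval z * h z}

/-- Positive part of the logarithm. -/
def posLog (x : ℝ) : ℝ := max (Real.log x) 0

/-- `𝔫(t, g)`: number of poles of `g`, with multiplicity, in `{z : |z - it/2| ≤ t/2, |z| ≥ 1}`. -/
def tsujiSmalln (g : ℂ → ℂ) (t : ℝ) : ℝ :=
  ∑' z : {z : ℂ | ‖z - Complex.I * (t / 2)‖ ≤ t / 2 ∧ 1 ≤ ‖z‖},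
    (poleMult g z : ℝ)

/-- `𝔑(r, g)`. -/
def tsujiBigN (g : ℂ → ℂ) (r : ℝ) : ℝ :=
  ∫ t in (1 : ℝ)..r, tsujiSmalln g t / t ^ 2

/-- `𝔪(r, g)`. -/
def tsujiM (g : ℂ → ℂ) (r : ℝ) : ℝ :=
  (2 * Real.pi)⁻¹ * ∫ θ in Real.arcsin (1 / r)..(Real.pi - Real.arcsin (1 / r)),
    posLog ‖g ((r * Real.sin θ : ℝ) * Complex.exp (θ * Complex.I))‖ /
      (r * Real.sin θ ^ 2)

/-- The Tsuji characteristic `𝔗(r, g) = 𝔪(r, g) + 𝔑(r, g)`. -/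
def tsujiT (g : ℂ → ℂ) (r : ℝ) : ℝ := tsujiM g r + tsujiBigN g r

/-- `𝔗(r, g) = O(log r)` as `r → ∞`. -/
def TsujiLogBounded (g : ℂ → ℂ) : Prop :=
  ∃ C r₀ : ℝ, ∀ r : ℝ, r₀ ≤ r → tsujiT g r ≤ C * Real.log r

/-- `g` has at least `n` zeros, counted with multiplicity, in the set `S`. -/
def ZerosAtLeast (g : ℂ → ℂ) (S : Set ℂ) (n : ℕ) : Prop :=
  ∃ (zs : Finset ℂ) (m : ℂ → ℕ),
    (↑zs : Set ℂ) ⊆ S ∧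
    (∀ z ∈ zs, 1 ≤ m z ∧ ∀ k < m z, iteratedDeriv k g z = 0) ∧
    n ≤ ∑ z ∈ zs, m z

/-- The logarithmic derivative `L = f'/f`. -/
def Lfun (f : ℂ → ℂ) : ℂ → ℂ := fun z => deriv f z / f z

/-- The auxiliary function `F = (T·L − 1)/(L + T)`, `T = tan`. -/
def Ffun (f : ℂ → ℂ) : ℂ → ℂ := fun z =>
  (Complex.tan z * Lfun f z - 1) / (Lfun f z + Complex.tan z)

/-- The auxiliary function `s_a = T·(F − a)/(T − F)`. -/
def sfun (f : ℂ → ℂ) (a : ℂ) : ℂ → ℂ := fun z =>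
  Complex.tan z * (Ffun f z - a) / (Complex.tan z - Ffun f z)

/-! With `z = x + iy`, `Im (tan z) = sinh y cosh y / |cos z|²` and
`|cos z|² = cos² x + sinh² y ≤ cosh² y`, so `Im (tan z) ≥ tanh y = (1 - e^{-2y}) / (1 + e^{-2y})`,
which is at least `(1 - e^{-2y}) / 2`. For `0 < y ≤ 1/2` moreover `1 - e^{-2y} ≥ y`, so
`Im z ≤ 2 Im (tan z)` there. -/

namespace Complex

theorem sin_re (z : ℂ) : (sin z).re = Real.sin z.re * Real.cosh z.im := by
  rw [sin_eq]; simp [← ofReal_sin, ← ofReal_cos, ← ofReal_cosh, ← ofReal_sinh]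

theorem sin_im (z : ℂ) : (sin z).im = Real.cos z.re * Real.sinh z.im := by
  rw [sin_eq]; simp [← ofReal_sin, ← ofReal_cos, ← ofReal_cosh, ← ofReal_sinh]

theorem cos_re (z : ℂ) : (cos z).re = Real.cos z.re * Real.cosh z.im := by
  rw [cos_eq]; simp [← ofReal_sin, ← ofReal_cos, ← ofReal_cosh, ← ofReal_sinh]

theorem cos_im (z : ℂ) : (cos z).im = -(Real.sin z.re * Real.sinh z.im) := by
  rw [cos_eq]; simp [← ofReal_sin, ← ofReal_cos, ← ofReal_cosh, ← ofReal_sinh]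

theorem normSq_cos (z : ℂ) : normSq (cos z) = Real.cos z.re ^ 2 + Real.sinh z.im ^ 2 := by
  rw [normSq_apply, cos_re, cos_im]
  linear_combination Real.cos z.re ^ 2 * Real.cosh_sq z.im
    + Real.sinh z.im ^ 2 * Real.sin_sq_add_cos_sq z.re

/-- Also true at the poles of `tan`, where both sides are `0` by the convention `x / 0 = 0`. -/
theorem tan_im (z : ℂ) :
    (tan z).im = Real.sinh z.im * Real.cosh z.im / normSq (cos z) := by
  rw [tan_eq_sin_div_cos, div_im, sin_re, sin_im, cos_re, cos_im, div_sub_div_same]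
  congr 1
  linear_combination Real.sinh z.im * Real.cosh z.im * Real.sin_sq_add_cos_sq z.re

theorem cos_ne_zero_of_im_ne_zero {z : ℂ} (hz : z.im ≠ 0) : cos z ≠ 0 := by
  rw [Ne, cos_eq_zero_iff]
  rintro ⟨k, rfl⟩
  exact hz (by simp)

theorem tanh_im_le_tan_im {z : ℂ} (hz : 0 < z.im) : Real.tanh z.im ≤ (tan z).im := by
  have hcos : 0 < normSq (cos z) := normSq_pos.mpr (cos_ne_zero_of_im_ne_zero hz.ne')
  have hcos_le : normSq (cos z) ≤ Real.cosh z.im ^ 2 := by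
    rw [normSq_cos, Real.cosh_sq']
    nlinarith [Real.cos_sq_le_one z.re]
  calc Real.tanh z.im = Real.sinh z.im * Real.cosh z.im / Real.cosh z.im ^ 2 := by
        rw [Real.tanh_eq_sinh_div_cosh]
        field_simp
    _ ≤ Real.sinh z.im * Real.cosh z.im / normSq (cos z) := by gcongr
    _ = (tan z).im := (tan_im z).symm

end Complex

namespace Real

theorem tanh_eq_one_sub_div_one_add (y : ℝ) :
    tanh y = (1 - exp (-2 * y)) / (1 + exp (-2 * y)) := by
  have h : exp (-2 * y) = exp (-y) / exp y := by rw [← exp_sub]; ring_nf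
  rw [tanh_eq, h]
  field_simp

theorem one_sub_exp_neg_two_mul_div_two_le_tanh {y : ℝ} (hy : 0 ≤ y) :
    (1 - exp (-2 * y)) / 2 ≤ tanh y := by
  have : exp (-2 * y) ≤ 1 := exp_le_one_iff.mpr (by linarith)
  rw [tanh_eq_one_sub_div_one_add]
  gcongr
  linarith

theorem le_one_sub_exp_neg_two_mul {y : ℝ} (h0 : 0 ≤ y) (h1 : y ≤ 1 / 2) :
    y ≤ 1 - exp (-2 * y) := by
  -- `e^{-2y} ≤ 1 / (1 + 2y) ≤ 1 - y`, the last step being `y (1 - 2y) ≥ 0`.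
  have hexp : exp (-2 * y) * exp (2 * y) = 1 := by rw [← exp_add]; simp
  nlinarith [add_one_le_exp (2 * y), exp_pos (-2 * y)]

end Real

theorem stmt5 :
    (∀ z : ℂ, 0 < z.im →
      Complex.cos z ≠ 0 ∧
      (1 - Real.exp (-2 * z.im)) / 2 ≤ (Complex.tan z).im ∧
      0 < (Complex.tan z).im) ∧
    ∃ C : ℝ, 0 < C ∧ ∃ δ : ℝ, 0 < δ ∧
      ∀ z : ℂ, 0 < z.im → z.im < δ → z.im ≤ C * (Complex.tan z).im := by
  have tan_im_lower (z : ℂ) (hz : 0 < z.im) : (1 - Real.exp (-2 * z.im)) / 2 ≤ (tan z).im :=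
    (Real.one_sub_exp_neg_two_mul_div_two_le_tanh hz.le).trans (tanh_im_le_tan_im hz)
  refine ⟨fun z hz => ⟨cos_ne_zero_of_im_ne_zero hz.ne', tan_im_lower z hz, ?_⟩,
    2, two_pos, 1 / 2, one_half_pos, fun z hz hδ => ?_⟩
  · have : Real.exp (-2 * z.im) < 1 := Real.exp_lt_one_iff.mpr (by linarith)
    linarith [tan_im_lower z hz]
  · linarith [tan_im_lower z hz, Real.le_one_sub_exp_neg_two_mul hz.le hδ.le]

end
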